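/- arXiv:2409.11663 — 3 statements merged into one kernel-verified Lean document; each statement's English description precedes it below -/
import Mathlib

section
/- Let N ≥ 1, let S > 0 and σ > 0, and let V ∈ ℝ^N. Let τx_0,…,τx_{N−1}, τy_0,…,τy_{N−1} be 2N independent real random variables, each with law gaussianReal 0 (S²σ²/2), and set τ_k = τx_k + i·τy_k ∈ ℂ. Then for every index j ∈ {0,…,N−1}, the law of the real random variable Re((F⁻¹(F(V) + τ))_j) — that is, the pushforward of the product measure ⊗_{k=0}^{N−1} (gaussianReal 0 (S²σ²/2) ⊗ gaussianReal 0 (S²σ²/2)) under the map (τx, τy) ↦ Re((F⁻¹(F(V) + τx + i·τy))_j), where V is regarded as an element of ℂ^N — is gaussianReal (V_j) (S²σ²/2). -/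
open MeasureTheory ProbabilityTheory

/-- The unitary discrete Fourier transform on `ℂ^N`. -/
noncomputable def dft {N : ℕ} (z : Fin N → ℂ) : Fin N → ℂ := fun i =>
  (1 / (Real.sqrt N : ℂ)) *
    ∑ n : Fin N, z n * Complex.exp (-(2 * (Real.pi : ℂ) * Complex.I * (i : ℕ) * (n : ℕ)) / N)

/-- The inverse unitary discrete Fourier transform on `ℂ^N`. -/
noncomputable def idft {N : ℕ} (z : Fin N → ℂ) : Fin N → ℂ := fun n =>
  (1 / (Real.sqrt N : ℂ)) *
    ∑ i : Fin N, z i * Complex.exp ((2 * (Real.pi : ℂ) * Complex.I * (i : ℕ) * (n : ℕ)) / N)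

/-!
Since `idft` inverts `dft`, the `j`-th output is `V j + ∑ k, Re (w k * τ k)` with
`‖w k‖² = 1 / N`. Writing `τ k = x + i y` with `x, y` i.i.d. `𝒩(0, v)`, the variable
`Re (w * τ k) = Re w * x - Im w * y` is `𝒩(0, ‖w‖² v)`: circular symmetry makes only `‖w‖`
matter. These are independent across `k`, so the noise is `𝒩(0, ∑ k, v / N) = 𝒩(0, v)`.
-/

open Complex
open scoped Real NNReal

namespace ProbabilityTheory

lemma iIndepFun.map_finsetSum_eq_gaussianReal {Ω ι : Type*} {mΩ : MeasurableSpace Ω}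
    {P : Measure Ω} [IsProbabilityMeasure P] {X : ι → Ω → ℝ} (hX : iIndepFun X P)
    {m : ι → ℝ} {v : ι → ℝ≥0}
    (hlaw : ∀ i, P.map (X i) = gaussianReal (m i) (v i)) (s : Finset ι) :
    P.map (∑ i ∈ s, X i) = gaussianReal (∑ i ∈ s, m i) (∑ i ∈ s, v i) := by
  classical
  induction s using Finset.induction_on with
  | empty => simp [Pi.zero_def, gaussianReal_zero_var]
  | insert i s hi ih =>
    have hmeas : ∀ i, AEMeasurable (X i) P := fun i ↦
      AEMeasurable.of_map_ne_zero (by simp [hlaw, NeZero.ne])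
    rw [Finset.sum_insert hi, Finset.sum_insert hi, Finset.sum_insert hi, add_comm (X i),
      add_comm (m i), add_comm (v i)]
    exact gaussianReal_add_gaussianReal_of_indepFun
      (hX.indepFun_finsetSum_of_notMem₀ hmeas hi) ih (hlaw i)

lemma pi_map_sum_eq_gaussianReal {ι : Type*} [Fintype ι] {α : ι → Type*}
    [∀ i, MeasurableSpace (α i)] {μ : ∀ i, Measure (α i)} [∀ i, IsProbabilityMeasure (μ i)]
    {f : ∀ i, α i → ℝ} (hf : ∀ i, Measurable (f i)) {m : ι → ℝ} {v : ι → ℝ≥0}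
    (hlaw : ∀ i, (μ i).map (f i) = gaussianReal (m i) (v i)) :
    (Measure.pi μ).map (fun x ↦ ∑ i, f i (x i)) = gaussianReal (∑ i, m i) (∑ i, v i) := by
  have hX := iIndepFun_pi (μ := μ) (X := f) fun i ↦ (hf i).aemeasurable
  convert hX.map_finsetSum_eq_gaussianReal (fun i ↦ ?_) Finset.univ using 2
  · ext x; simp
  · rw [← hlaw i, ← (measurePreserving_eval μ i).map_eq,
      Measure.map_map (hf i) (measurable_pi_apply i)]
    rfl

lemma map_re_mul_eq_gaussianReal (v : ℝ≥0) (w : ℂ) :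
    ((gaussianReal 0 v).prod (gaussianReal 0 v)).map
        (fun p : ℝ × ℝ ↦ (w * (p.1 + I * p.2)).re)
      = gaussianReal 0 (‖w‖₊ ^ 2 * v) := by
  have hre : (fun p : ℝ × ℝ ↦ (w * (p.1 + I * p.2)).re)
      = (fun q : ℝ × ℝ ↦ q.1 + q.2) ∘ Prod.map (w.re * ·) (-w.im * ·) := by
    ext p; simp; ring
  rw [hre, ← Measure.map_map measurable_add
      ((measurable_const_mul _).prodMap (measurable_const_mul _)),
    ← Measure.map_prod_map _ _ (measurable_const_mul _) (measurable_const_mul _),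
    gaussianReal_map_const_mul, gaussianReal_map_const_mul, ← Measure.conv,
    gaussianReal_conv_gaussianReal]
  congr 1
  · simp
  · ext
    push_cast
    simp [Complex.sq_norm, Complex.normSq_apply]
    ring

end ProbabilityTheory

lemma sum_range_exp_two_pi_I_mul_div (N : ℕ) (m : ℤ) :
    ∑ i ∈ Finset.range N, exp (2 * π * I * m * i / N) = if (N : ℤ) ∣ m then (N : ℂ) else 0 := by
  rcases eq_or_ne N 0 with rfl | hN
  · simp
  set w := exp (2 * π * I * m / N)
  have hterm : ∀ i : ℕ, exp (2 * π * I * m * i / N) = w ^ i := fun i ↦ by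
    rw [← exp_nat_mul]; ring_nf
  simp_rw [hterm]
  split_ifs with hdvd
  · obtain ⟨k, rfl⟩ := hdvd
    have hw : w = 1 := by
      rw [exp_eq_one_iff]; exact ⟨k, by push_cast; field_simp⟩
    simp [hw]
  · have hw : w ≠ 1 := by
      rw [Ne, exp_eq_one_iff]
      rintro ⟨k, hk⟩
      refine hdvd ⟨k, ?_⟩
      have : (m : ℂ) = N * k := by
        field_simp at hk
        exact hk
      exact_mod_cast this
    have hwN : w ^ N = 1 := by
      rw [← exp_nat_mul, exp_eq_one_iff]; exact ⟨m, by field_simp⟩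
    rw [geom_sum_eq hw, hwN, sub_self, zero_div]

lemma sum_exp_neg_mul_exp_mul_eq_ite {N : ℕ} (m n : Fin N) :
    ∑ i : Fin N,
        exp (-(2 * π * I * (i : ℕ) * (m : ℕ)) / N) * exp (2 * π * I * (i : ℕ) * (n : ℕ) / N)
      = if m = n then (N : ℂ) else 0 := by
  have hcomb : ∀ i : Fin N, exp (-(2 * π * I * (i : ℕ) * (m : ℕ)) / N)
      * exp (2 * π * I * (i : ℕ) * (n : ℕ) / N)
      = exp (2 * π * I * (((n : ℕ) - (m : ℕ) : ℤ) : ℂ) * (i : ℕ) / N) := fun i ↦ by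
    rw [← exp_add]; push_cast; ring_nf
  have hdvd : (N : ℤ) ∣ (n : ℕ) - (m : ℕ) ↔ m = n := by
    refine ⟨fun h ↦ ?_, fun h ↦ by simp [h]⟩
    have := Int.eq_zero_of_abs_lt_dvd h (by rw [abs_lt]; omega)
    exact Fin.ext (by omega)
  simp_rw [hcomb]
  rw [Fin.sum_univ_eq_sum_range
      (fun i ↦ exp (2 * π * I * (((n : ℕ) - (m : ℕ) : ℤ) : ℂ) * i / N)),
    sum_range_exp_two_pi_I_mul_div]
  exact if_congr hdvd rfl rfl

lemma idft_dft {N : ℕ} [NeZero N] (z : Fin N → ℂ) : idft (dft z) = z := by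
  funext n
  have hsqrt : (1 / (√N : ℂ)) * (1 / (√N : ℂ)) = 1 / N := by
    rw [div_mul_div_comm, one_mul, ← ofReal_mul, Real.mul_self_sqrt (Nat.cast_nonneg N)]
    push_cast; ring
  calc idft (dft z) n
      = (1 / (√N : ℂ)) * (1 / (√N : ℂ)) * ∑ m, z m * ∑ i : Fin N,
          exp (-(2 * π * I * (i : ℕ) * (m : ℕ)) / N) * exp (2 * π * I * (i : ℕ) * (n : ℕ) / N) := by
        simp only [idft, dft, Finset.mul_sum, Finset.sum_mul]
        rw [Finset.sum_comm]
        refine Finset.sum_congr rfl fun m _ ↦ Finset.sum_congr rfl fun i _ ↦ by ring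
    _ = z n := by
        simp_rw [sum_exp_neg_mul_exp_mul_eq_ite, mul_ite, mul_zero, Finset.sum_ite_eq',
          Finset.mem_univ, if_true, hsqrt]
        field_simp [NeZero.ne (N : ℂ)]

noncomputable def idftCoeff {N : ℕ} (n i : Fin N) : ℂ :=
  1 / (√N : ℂ) * exp (2 * π * I * (i : ℕ) * (n : ℕ) / N)

lemma idft_apply {N : ℕ} (z : Fin N → ℂ) (n : Fin N) : idft z n = ∑ i, idftCoeff n i * z i := by
  simp only [idft, idftCoeff, Finset.mul_sum]
  exact Finset.sum_congr rfl fun i _ ↦ by ring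

lemma idft_add {N : ℕ} (z z' : Fin N → ℂ) (n : Fin N) :
    idft (fun i ↦ z i + z' i) n = idft z n + idft z' n := by
  simp only [idft_apply, mul_add, Finset.sum_add_distrib]

lemma nnnorm_idftCoeff_sq {N : ℕ} (n i : Fin N) : ‖idftCoeff n i‖₊ ^ 2 = (N : ℝ≥0)⁻¹ := by
  have harg : 2 * π * I * (i : ℕ) * (n : ℕ) / N
      = ((2 * π * (i : ℕ) * (n : ℕ) / N : ℝ) : ℂ) * I := by
    push_cast; ring
  ext
  rw [idftCoeff, harg, NNReal.coe_pow, coe_nnnorm, norm_mul, norm_exp_ofReal_mul_I]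
  simp

theorem gredp_main_general (N : ℕ) (S σ : ℝ)
    (V : Fin N → ℝ) (j : Fin N) :
    Measure.map
      (fun τ : Fin N → ℝ × ℝ =>
        (idft (fun k => dft (fun n => (V n : ℂ)) k
          + (((τ k).1 : ℂ) + Complex.I * ((τ k).2 : ℂ))) j).re)
      (Measure.pi (fun _ : Fin N =>
        (gaussianReal 0 ((S ^ 2 * σ ^ 2 / 2).toNNReal)).prod
          (gaussianReal 0 ((S ^ 2 * σ ^ 2 / 2).toNNReal))))
      = gaussianReal (V j) ((S ^ 2 * σ ^ 2 / 2).toNNReal) := by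
  have : NeZero N := ⟨j.pos.ne'⟩
  set v := (S ^ 2 * σ ^ 2 / 2).toNNReal
  have hsignal : ∀ τ : Fin N → ℝ × ℝ,
      (idft (fun k => dft (fun n => (V n : ℂ)) k + (((τ k).1 : ℂ) + I * ((τ k).2 : ℂ))) j).re
        = V j + ∑ k, (idftCoeff j k * ((τ k).1 + I * (τ k).2)).re := fun τ ↦ by
    rw [idft_add, idft_dft, idft_apply, add_re, re_sum, ofReal_re]
  have hnoise := pi_map_sum_eq_gaussianReal
    (μ := fun _ : Fin N ↦ (gaussianReal 0 v).prod (gaussianReal 0 v)) (by fun_prop)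
    fun k ↦ map_re_mul_eq_gaussianReal v (idftCoeff j k)
  have hvar : ∑ k : Fin N, ‖idftCoeff j k‖₊ ^ 2 * v = v := by
    simp [nnnorm_idftCoeff_sq, NeZero.ne (N : ℝ≥0)]
  rw [funext hsignal]
  convert congrArg (Measure.map (V j + ·)) hnoise using 1
  · rw [Measure.map_map (by fun_prop) (by fun_prop)]
    rfl
  · rw [gaussianReal_map_const_add, Finset.sum_const_zero, zero_add, hvar]

/-- Theorem 1 of the paper: adding circularly symmetric complex Gaussian noise with
per-component variance `S²σ²/2` in the frequency domain, inverting the transform,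
and keeping only the real part yields `V_j` perturbed by a real Gaussian of
variance `S²σ²/2`. -/
theorem gredp_main (N : ℕ) (hN : 1 ≤ N) (S σ : ℝ) (hS : 0 < S) (hσ : 0 < σ)
    (V : Fin N → ℝ) (j : Fin N) :
    Measure.map
      (fun τ : Fin N → ℝ × ℝ =>
        (idft (fun k => dft (fun n => (V n : ℂ)) k
          + (((τ k).1 : ℂ) + Complex.I * ((τ k).2 : ℂ))) j).re)
      (Measure.pi (fun _ : Fin N =>
        (gaussianReal 0 ((S ^ 2 * σ ^ 2 / 2).toNNReal)).prod
          (gaussianReal 0 ((S ^ 2 * σ ^ 2 / 2).toNNReal))))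
      = gaussianReal (V j) ((S ^ 2 * σ ^ 2 / 2).toNNReal) :=
  gredp_main_general N S σ V j
end

section
/- Let N ≥ 1, let S > 0 and σ > 0, and let (γ_{m,n})_{m,n ∈ {0,…,N−1}} be N² independent real random variables, each with law gaussianReal 0 (σ²S²). Define the two-dimensional inverse discrete Fourier transform υ_{k,l} = (1/N) ∑_{m=0}^{N−1} ∑_{n=0}^{N−1} γ_{m,n} · exp(2πi·(mk + nl)/N). Then for every pair of indices (k,l) ∈ {0,…,N−1}² such that it is not the case that N divides 2k and N divides 2l, the law of the real random variable Re(υ_{k,l}) — the pushforward of the product measure ⊗_{(m,n)} gaussianReal 0 (σ²S²) under the map γ ↦ Re(υ_{k,l}) — is gaussianReal 0 (σ²S²/2). -/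
/-!
With `ζ = exp (2πi/N)`, the real part of `υ_{k,l}` is the linear form `∑ c_{m,n} γ_{m,n}` with
`c_{m,n} = Re (ζ ^ (mk + nl)) / N`, so it is a centred Gaussian of variance `σ²S² ∑ c_{m,n}²`.
Since `2 (Re z)² = |z|² + Re (z²)` and `|ζ| = 1`, `2 N² ∑ c_{m,n}²` is `N²` plus the real part of
`(∑ₘ ζ^(2km)) (∑ₙ ζ^(2ln))`, and the hypothesis on `(k, l)` makes one of these geometric sums vanish.
-/

open MeasureTheory ProbabilityTheory Finset
open scoped NNReal

lemma map_finsetSum_eq_gaussianReal {Ω ι : Type*} {mΩ : MeasurableSpace Ω} {P : Measure Ω}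
    [IsProbabilityMeasure P] {X : ι → Ω → ℝ} (hindep : iIndepFun X P)
    (hmeas : ∀ i, Measurable (X i)) {m : ι → ℝ} {v : ι → ℝ≥0}
    (hX : ∀ i, P.map (X i) = gaussianReal (m i) (v i)) (s : Finset ι) :
    P.map (∑ i ∈ s, X i) = gaussianReal (∑ i ∈ s, m i) (∑ i ∈ s, v i) := by
  classical
  induction s using Finset.induction_on with
  | empty => simp [Pi.zero_def, gaussianReal_zero_var]
  | insert a s ha ih =>
    rw [sum_insert ha, sum_insert ha, sum_insert ha, add_comm (X a), add_comm (m a),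
      add_comm (v a)]
    exact gaussianReal_add_gaussianReal_of_indepFun
      (hindep.indepFun_finsetSum_of_notMem hmeas ha) ih (hX a)

lemma map_pi_sum_mul_eq_gaussianReal {ι : Type*} [Fintype ι] (c : ι → ℝ) (v : ℝ≥0) :
    (Measure.pi fun _ : ι => gaussianReal 0 v).map (fun x => ∑ i, c i * x i)
      = gaussianReal 0 ((∑ i, ‖c i‖₊ ^ 2) * v) := by
  have hlaw : ∀ i, (Measure.pi fun _ : ι => gaussianReal 0 v).map (fun x => c i * x i)
      = gaussianReal 0 (‖c i‖₊ ^ 2 * v) := by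
    intro i
    rw [show (fun x : ι → ℝ => c i * x i) = (c i * ·) ∘ (fun x => x i) from rfl,
      ← Measure.map_map (measurable_const_mul (c i)) (measurable_pi_apply i),
      (measurePreserving_eval _ i).map_eq, gaussianReal_map_const_mul, mul_zero]
    congr 1
    ext
    simp
  have := map_finsetSum_eq_gaussianReal (P := Measure.pi fun _ : ι => gaussianReal 0 v)
    (X := fun i x => c i * x i) (iIndepFun_pi (X := fun i (y : ℝ) => c i * y) (fun i => by fun_prop))
    (fun i => by fun_prop) hlaw univ
  simpa [sum_mul, sum_fn] using this

lemma IsPrimitiveRoot.sum_range_pow_mul_eq_zero {K : Type*} [Field K] {ζ : K} {N j : ℕ}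
    (hζ : IsPrimitiveRoot ζ N) (hj : ¬ N ∣ j) : ∑ m ∈ range N, ζ ^ (j * m) = 0 := by
  have hζj : ζ ^ j ≠ 1 := by rwa [Ne, hζ.pow_eq_one_iff_dvd]
  simp_rw [pow_mul]
  rw [geom_sum_eq hζj, ← pow_mul, mul_comm, pow_mul, hζ.pow_eq_one, one_pow, sub_self, zero_div]

lemma Complex.two_mul_re_sq (z : ℂ) : 2 * z.re ^ 2 = Complex.normSq z + (z ^ 2).re := by
  simp only [sq, Complex.mul_re, Complex.normSq_apply]
  ring

lemma IsPrimitiveRoot.sum_sum_re_pow_sq {ζ : ℂ} {N : ℕ} (hζ : IsPrimitiveRoot ζ N) (hN : N ≠ 0)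
    {k l : ℕ} (hkl : ¬ (N ∣ 2 * k ∧ N ∣ 2 * l)) :
    ∑ m ∈ range N, ∑ n ∈ range N, (ζ ^ (m * k + n * l)).re ^ 2 = (N : ℝ) ^ 2 / 2 := by
  have hnorm : ∀ p : ℕ, Complex.normSq (ζ ^ p) = 1 := fun p => by
    rw [map_pow, Complex.normSq_eq_norm_sq, hζ.norm'_eq_one hN, one_pow, one_pow]
  have hsplit : ∑ m ∈ range N, ∑ n ∈ range N, ((ζ ^ (m * k + n * l)) ^ 2).re
      = ((∑ m ∈ range N, ζ ^ (2 * k * m)) * ∑ n ∈ range N, ζ ^ (2 * l * n)).re := by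
    rw [sum_mul_sum, Complex.re_sum]
    refine sum_congr rfl fun m _ => ?_
    rw [Complex.re_sum]
    refine sum_congr rfl fun n _ => ?_
    rw [← pow_mul, ← pow_add]
    ring_nf
  have hzero : (∑ m ∈ range N, ζ ^ (2 * k * m)) * ∑ n ∈ range N, ζ ^ (2 * l * n) = 0 := by
    by_cases hk : N ∣ 2 * k
    · rw [hζ.sum_range_pow_mul_eq_zero fun hl => hkl ⟨hk, hl⟩, mul_zero]
    · rw [hζ.sum_range_pow_mul_eq_zero hk, zero_mul]
  have h2 : 2 * ∑ m ∈ range N, ∑ n ∈ range N, (ζ ^ (m * k + n * l)).re ^ 2 = (N : ℝ) ^ 2 := by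
    simp_rw [mul_sum, Complex.two_mul_re_sq, hnorm, sum_add_distrib, hsplit, hzero]
    simp [sq]
  linarith

theorem gredp_conv2d_general (N : ℕ) (S σ : ℝ)
    (k l : Fin N) (hkl : ¬ (N ∣ 2 * (k : ℕ) ∧ N ∣ 2 * (l : ℕ))) :
    Measure.map
      (fun γ : Fin N × Fin N → ℝ =>
        ((1 / (N : ℂ)) * ∑ m : Fin N, ∑ n : Fin N,
          (γ (m, n) : ℂ) *
            Complex.exp ((2 * (Real.pi : ℂ) * Complex.I *
              (((m : ℕ) * (k : ℕ) + (n : ℕ) * (l : ℕ) : ℕ) : ℂ)) / N)).re)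
      (Measure.pi (fun _ : Fin N × Fin N => gaussianReal 0 ((σ ^ 2 * S ^ 2).toNNReal)))
      = gaussianReal 0 ((σ ^ 2 * S ^ 2 / 2).toNNReal) := by
  have hN : N ≠ 0 := k.pos.ne'
  set ζ : ℂ := Complex.exp (2 * Real.pi * Complex.I / N)
  have hζ : IsPrimitiveRoot ζ N := Complex.isPrimitiveRoot_exp N hN
  let c : Fin N × Fin N → ℝ := fun p => (ζ ^ ((p.1 : ℕ) * k + (p.2 : ℕ) * l)).re / N
  have hc : ∑ p, (c p) ^ 2 = 1 / 2 := by
    have h := hζ.sum_sum_re_pow_sq hN hkl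
    simp only [sum_range] at h
    simp only [c, div_pow, ← sum_div, Fintype.sum_prod_type, h]
    field_simp
  convert map_pi_sum_mul_eq_gaussianReal c _ using 2
  · ext γ
    have hexp : ∀ p : ℕ, Complex.exp (2 * Real.pi * Complex.I * p / N) = ζ ^ p := fun p => by
      rw [← Complex.exp_nat_mul]
      ring_nf
    simp only [hexp, Fintype.sum_prod_type, mul_sum, Complex.re_sum, c]
    refine sum_congr rfl fun m _ => sum_congr rfl fun n _ => ?_
    rw [one_div, ← Complex.ofReal_natCast, ← Complex.ofReal_inv, Complex.re_ofReal_mul,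
      Complex.re_ofReal_mul]
    ring
  · ext
    rw [NNReal.coe_mul, NNReal.coe_sum, Real.coe_toNNReal _ (by positivity),
      Real.coe_toNNReal _ (by positivity)]
    simp only [NNReal.coe_pow, coe_nnnorm, Real.norm_eq_abs, sq_abs, hc]
    ring

/-- Corollary 1 of the paper: if a matrix of i.i.d. real Gaussian noise of variance `σ²S²`
is placed in the frequency domain and the two-dimensional inverse Fourier transform is
applied, then the real part of each entry `(k,l)` with `¬(N ∣ 2k ∧ N ∣ 2l)` follows a
normal distribution of variance `σ²S²/2`. -/
theorem gredp_conv2d (N : ℕ) (hN : 1 ≤ N) (S σ : ℝ) (hS : 0 < S) (hσ : 0 < σ)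
    (k l : Fin N) (hkl : ¬ (N ∣ 2 * (k : ℕ) ∧ N ∣ 2 * (l : ℕ))) :
    Measure.map
      (fun γ : Fin N × Fin N → ℝ =>
        ((1 / (N : ℂ)) * ∑ m : Fin N, ∑ n : Fin N,
          (γ (m, n) : ℂ) *
            Complex.exp ((2 * (Real.pi : ℂ) * Complex.I *
              (((m : ℕ) * (k : ℕ) + (n : ℕ) * (l : ℕ) : ℕ) : ℂ)) / N)).re)
      (Measure.pi (fun _ : Fin N × Fin N => gaussianReal 0 ((σ ^ 2 * S ^ 2).toNNReal)))
      = gaussianReal 0 ((σ ^ 2 * S ^ 2 / 2).toNNReal) :=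
  gredp_conv2d_general N S σ k l hkl
end

section
/- Let N ≥ 1, let v > 0, let a, b ∈ ℝ with a² + b² = 1, and let j be an integer such that N does not divide 2j. Let X_1,…,X_N be independent real random variables each with law gaussianReal 0 (a²v), and Y_1,…,Y_N be independent real random variables each with law gaussianReal 0 (b²v), with all 2N variables jointly independent. Then the law of the random variable Z = (1/√N) ∑_{k=1}^{N} (X_k·cos(2πkj/N) + Y_k·sin(2πkj/N)) — the pushforward of the product measure ⊗_{k=1}^{N} (gaussianReal 0 (a²v) ⊗ gaussianReal 0 (b²v)) under this linear map — is gaussianReal 0 (v/2). -/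
/-!
Under the product measure the `N` summands are independent centred Gaussians, the `k`-th with
variance `a²v cos²θₖ + b²v sin²θₖ`, where `θₖ = 2π(k+1)j/N`; comparing characteristic functions,
their sum is Gaussian with the summed variance. Since `N ∤ 2j`, `ζ = exp(2πi·2j/N)` is an `N`-th
root of unity other than `1`, so `∑ₖ cos 2θₖ = Re ∑ₖ ζ^(k+1) = 0`. Hence
`∑ₖ cos²θₖ = ∑ₖ sin²θₖ = N/2`, and after scaling by `1/√N` the variance is `(a² + b²)v/2 = v/2`.
-/

open MeasureTheory ProbabilityTheory Real Finset
open scoped NNReal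

lemma geom_sum_eq_zero_of_pow_eq_one {R : Type*} [Ring R] [NoZeroDivisors R] {x : R} {n : ℕ}
    (hx : x ≠ 1) (hxn : x ^ n = 1) : ∑ i ∈ range n, x ^ i = 0 := by
  have h := geom_sum_mul x n
  rw [hxn, sub_self] at h
  exact (mul_eq_zero.mp h).resolve_right (sub_ne_zero.mpr hx)

lemma sum_cos_two_pi_mul_div_eq_zero {N : ℕ} {m : ℤ} (hm : ¬ (N : ℤ) ∣ m) :
    ∑ k : Fin N, cos (2 * π * ((k : ℕ) + 1) * m / N) = 0 := by
  rcases N.eq_zero_or_pos with rfl | hN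
  · simp
  set ω : ℂ := Complex.exp (2 * π * Complex.I / N)
  have hω : IsPrimitiveRoot ω N := Complex.isPrimitiveRoot_exp N hN.ne'
  have hζ_ne_one : ω ^ m ≠ 1 := fun h => hm ((hω.zpow_eq_one_iff_dvd m).mp h)
  have hζ_pow : (ω ^ m) ^ N = 1 := by
    rw [← zpow_natCast, ← zpow_mul, mul_comm m, zpow_mul, zpow_natCast, hω.pow_eq_one, one_zpow]
  have hcos (k : Fin N) :
      cos (2 * π * ((k : ℕ) + 1) * m / N) = ((ω ^ m) ^ ((k : ℕ) + 1)).re := by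
    rw [← Complex.exp_int_mul, ← Complex.exp_nat_mul, ← Complex.exp_ofReal_mul_I_re]
    congr 2
    push_cast
    ring
  rw [sum_congr rfl fun k _ => hcos k, ← Complex.re_sum,
    Fin.sum_univ_eq_sum_range (fun k => (ω ^ m) ^ (k + 1)),
    sum_congr rfl fun k _ => pow_succ' (ω ^ m) k, ← mul_sum,
    geom_sum_eq_zero_of_pow_eq_one hζ_ne_one hζ_pow, mul_zero, Complex.zero_re]

lemma sum_cos_sq_two_pi_mul_div {N : ℕ} {j : ℤ} (hj : ¬ (N : ℤ) ∣ 2 * j) :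
    ∑ k : Fin N, cos (2 * π * ((k : ℕ) + 1) * j / N) ^ 2 = N / 2 := by
  have hcos_sq (k : Fin N) : cos (2 * π * ((k : ℕ) + 1) * j / N) ^ 2
      = 1 / 2 + cos (2 * π * ((k : ℕ) + 1) * ((2 * j : ℤ) : ℝ) / N) / 2 := by
    rw [cos_sq]
    push_cast
    ring_nf
  simp only [hcos_sq, sum_add_distrib, ← sum_div, sum_cos_two_pi_mul_div_eq_zero hj]
  simp

lemma sum_sin_sq_two_pi_mul_div {N : ℕ} {j : ℤ} (hj : ¬ (N : ℤ) ∣ 2 * j) :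
    ∑ k : Fin N, sin (2 * π * ((k : ℕ) + 1) * j / N) ^ 2 = N / 2 := by
  simp only [sin_sq, sum_sub_distrib, sum_cos_sq_two_pi_mul_div hj]
  simp only [sum_const, card_univ, Fintype.card_fin, nsmul_eq_mul, mul_one]
  ring

lemma map_sum_pi_gaussianReal {ι : Type*} [Fintype ι] (m : ι → ℝ) (v : ι → ℝ≥0) :
    (Measure.pi fun i => gaussianReal (m i) (v i)).map (fun x => ∑ i, x i)
      = gaussianReal (∑ i, m i) (∑ i, v i) := by
  refine Measure.ext_of_charFun (funext fun t => ?_)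
  simp only [charFun_map_sum_pi_eq_prod, prod_apply, charFun_gaussianReal, ← Complex.exp_sum]
  congr 1
  push_cast
  simp only [sum_sub_distrib, ← sum_div, ← sum_mul, ← mul_sum]

lemma map_linear_prod_gaussianReal (c s m₁ m₂ : ℝ) (v₁ v₂ : ℝ≥0) :
    ((gaussianReal m₁ v₁).prod (gaussianReal m₂ v₂)).map (fun p => p.1 * c + p.2 * s)
      = gaussianReal (c * m₁ + s * m₂)
          (.mk (c ^ 2) (sq_nonneg c) * v₁ + .mk (s ^ 2) (sq_nonneg s) * v₂) := by
  have h : (fun p : ℝ × ℝ => p.1 * c + p.2 * s)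
      = (fun q : ℝ × ℝ => q.1 + q.2) ∘ Prod.map (· * c) (· * s) := rfl
  rw [h, ← Measure.map_map (by fun_prop) (by fun_prop),
    ← Measure.map_prod_map _ _ (by fun_prop) (by fun_prop),
    gaussianReal_map_mul_const, gaussianReal_map_mul_const]
  exact gaussianReal_conv_gaussianReal

/-- Central distributional computation in the proof of Theorem 2: if `X_1,…,X_N` are
i.i.d. `N(0, a²v)`, `Y_1,…,Y_N` are i.i.d. `N(0, b²v)`, all jointly independent, with
`a² + b² = 1` and `N ∤ 2j`, then
`Z = (1/√N) ∑_{k=1}^N (X_k cos(2πkj/N) + Y_k sin(2πkj/N))` is `N(0, v/2)`. -/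
theorem gaussian_lin_comb (N : ℕ) (hN : 1 ≤ N) (v : ℝ) (hv : 0 < v)
    (a b : ℝ) (hab : a ^ 2 + b ^ 2 = 1) (j : ℤ) (hj : ¬ ((N : ℤ) ∣ 2 * j)) :
    Measure.map
      (fun ω : Fin N → ℝ × ℝ =>
        (1 / Real.sqrt N) *
          ∑ k : Fin N,
            ((ω k).1 * Real.cos (2 * Real.pi * ((k : ℕ) + 1) * j / N)
              + (ω k).2 * Real.sin (2 * Real.pi * ((k : ℕ) + 1) * j / N)))
      (Measure.pi (fun _ : Fin N =>
        (gaussianReal 0 ((a ^ 2 * v).toNNReal)).prod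
          (gaussianReal 0 ((b ^ 2 * v).toNNReal))))
      = gaussianReal 0 ((v / 2).toNNReal) := by
  set θ : Fin N → ℝ := fun k => 2 * π * ((k : ℕ) + 1) * j / N
  set f : Fin N → ℝ × ℝ → ℝ := fun k p => p.1 * cos (θ k) + p.2 * sin (θ k)
  have hdecomp : (fun ω : Fin N → ℝ × ℝ => (1 / √N) * ∑ k, f k (ω k))
      = (fun x => (1 / √N) * x) ∘ (fun y : Fin N → ℝ => ∑ k, y k) ∘ (fun ω k => f k (ω k)) :=
    rfl
  rw [hdecomp, ← Measure.map_map (by fun_prop) (by fun_prop),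
    ← Measure.map_map (by fun_prop) (by fun_prop), Measure.pi_map_pi (f := f) (by fun_prop)]
  simp only [f, map_linear_prod_gaussianReal, mul_zero, add_zero]
  rw [map_sum_pi_gaussianReal, gaussianReal_map_const_mul, sum_const_zero, mul_zero]
  congr 1
  rw [← NNReal.coe_inj]
  simp only [NNReal.coe_mul, NNReal.coe_sum, NNReal.coe_add, NNReal.coe_mk,
    Real.coe_toNNReal _ (by positivity : 0 ≤ a ^ 2 * v),
    Real.coe_toNNReal _ (by positivity : 0 ≤ b ^ 2 * v),
    Real.coe_toNNReal _ (by positivity : 0 ≤ v / 2)]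
  rw [sum_add_distrib, ← sum_mul, ← sum_mul, sum_cos_sq_two_pi_mul_div hj,
    sum_sin_sq_two_pi_mul_div hj, div_pow, Real.sq_sqrt (Nat.cast_nonneg N)]
  field_simp
  linear_combination hab
end
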